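/- (Explicit bound on γ_{N,S}, inequality (12)) Suppose λ ∈ (0,1), and define χ := 1 − λ_min(P)/φ_∞ ∈ (0,1) and ψ := λ_max(Kᵀ Q K + Āᵀ P Ā)/λ_min(P). Then α_M ≤ ψ·χ^M for every integer M ≥ 0, and for all integers S ≥ 1 and N ≥ S + 1, γ_{N,S} ≤ χ·(1 + α_{N−S−1})^{S+2} ≤ χ·(1 + ψ·χ^{N−S−1})^{S+2}. -/

import Mathlib

open Matrix Finset Filter Topology

/-- The smallest eigenvalue of a (symmetric) real matrix. -/
noncomputable def lamMin {n : ℕ} (R : Matrix (Fin n) (Fin n) ℝ) : ℝ :=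
  if h : R.IsHermitian then ⨅ i, h.eigenvalues i else 0

/-- The largest eigenvalue of a (symmetric) real matrix. -/
noncomputable def lamMax {n : ℕ} (R : Matrix (Fin n) (Fin n) ℝ) : ℝ :=
  if h : R.IsHermitian then ⨆ i, h.eigenvalues i else 0

/-- The quadratic form `xᵀ R x`. -/
noncomputable def qf {p : ℕ} (R : Matrix (Fin p) (Fin p) ℝ) (x : Fin p → ℝ) : ℝ :=
  x ⬝ᵥ R.mulVec x

/-- λ := 1 − λ_min(Q̄)/λ_max(P̄). -/
noncomputable def lamParam {n : ℕ} (Qb Pb : Matrix (Fin n) (Fin n) ℝ) : ℝ :=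
  1 - lamMin Qb / lamMax Pb

/-- φ_N := (λ_max(P̄)·λ_max(P + KᵀQK)/λ_min(P̄))·(1 − λ^{N+1})/(1 − λ). -/
noncomputable def phi {n m : ℕ} (Qb Pb P : Matrix (Fin n) (Fin n) ℝ)
    (Q : Matrix (Fin m) (Fin m) ℝ) (K : Matrix (Fin m) (Fin n) ℝ) (N : ℕ) : ℝ :=
  (lamMax Pb * lamMax (P + Kᵀ * Q * K) / lamMin Pb) *
    ((1 - lamParam Qb Pb ^ (N + 1)) / (1 - lamParam Qb Pb))

/-- φ_∞ := λ_max(P̄)·λ_max(P + KᵀQK)/(λ_min(P̄)·(1 − λ)). -/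
noncomputable def phiInf {n m : ℕ} (Qb Pb P : Matrix (Fin n) (Fin n) ℝ)
    (Q : Matrix (Fin m) (Fin m) ℝ) (K : Matrix (Fin m) (Fin n) ℝ) : ℝ :=
  lamMax Pb * lamMax (P + Kᵀ * Q * K) / (lamMin Pb * (1 - lamParam Qb Pb))

/-- ψ := λ_max(KᵀQK + ĀᵀPĀ)/λ_min(P). -/
noncomputable def psiC {n m : ℕ} (P Abar : Matrix (Fin n) (Fin n) ℝ)
    (Q : Matrix (Fin m) (Fin m) ℝ) (K : Matrix (Fin m) (Fin n) ℝ) : ℝ :=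
  lamMax (Kᵀ * Q * K + Abarᵀ * P * Abar) / lamMin P

/-- χ := 1 − λ_min(P)/φ_∞. -/
noncomputable def chiC {n m : ℕ} (Qb Pb P : Matrix (Fin n) (Fin n) ℝ)
    (Q : Matrix (Fin m) (Fin m) ℝ) (K : Matrix (Fin m) (Fin n) ℝ) : ℝ :=
  1 - lamMin P / phiInf Qb Pb P Q K

/-- α_N := (λ_max(KᵀQK + ĀᵀPĀ)/λ_min(P))·∏_{κ=0}^{N−1}(1 − λ_min(P)/φ_{κ+1}). -/
noncomputable def alphaC {n m : ℕ} (Qb Pb P Abar : Matrix (Fin n) (Fin n) ℝ)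
    (Q : Matrix (Fin m) (Fin m) ℝ) (K : Matrix (Fin m) (Fin n) ℝ) (N : ℕ) : ℝ :=
  psiC P Abar Q K * ∏ κ ∈ Finset.range N, (1 - lamMin P / phi Qb Pb P Q K (κ + 1))

/-- γ_{N,S} := (1 − λ_min(P)/φ_∞)·max{1 + α_{N−S−1}, (1 + α_{N−1})·∏_{ℓ=N−S}^{N−1}(1 + α_ℓ)}. -/
noncomputable def gammaNS {n m : ℕ} (Qb Pb P Abar : Matrix (Fin n) (Fin n) ℝ)
    (Q : Matrix (Fin m) (Fin m) ℝ) (K : Matrix (Fin m) (Fin n) ℝ) (N S : ℕ) : ℝ :=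
  (1 - lamMin P / phiInf Qb Pb P Q K) *
    max (1 + alphaC Qb Pb P Abar Q K (N - S - 1))
      ((1 + alphaC Qb Pb P Abar Q K (N - 1)) *
        ∏ ℓ ∈ Finset.Ico (N - S) N, (1 + alphaC Qb Pb P Abar Q K ℓ))

/-- The trajectory of `x(τ+1) = A x(τ) + B u(τ)` from `x0` under the control sequence `u`. -/
def traj {n m : ℕ} (A : Matrix (Fin n) (Fin n) ℝ) (B : Matrix (Fin n) (Fin m) ℝ)
    (x0 : Fin n → ℝ) (u : ℕ → Fin m → ℝ) : ℕ → Fin n → ℝ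
  | 0 => x0
  | τ + 1 => A *ᵥ traj A B x0 u τ + B *ᵥ u τ

/-- Feasibility of a control sequence `u(0),…,u(N−1)` for the `N`-QP at `x`. -/
def Feasible {n m : ℕ} (A : Matrix (Fin n) (Fin n) ℝ) (B : Matrix (Fin n) (Fin m) ℝ)
    (X0 : Set (Fin n → ℝ)) (U : Set (Fin m → ℝ)) (N : ℕ) (x : Fin n → ℝ)
    (u : ℕ → Fin m → ℝ) : Prop :=
  (∀ τ < N, u τ ∈ U) ∧ (∀ τ < N, traj A B x u (τ + 1) ∈ X0)

/-- The cost `Σ_{τ=0}^{N−1}(x(τ)ᵀPx(τ) + u(τ)ᵀQu(τ)) + x(N)ᵀPx(N)` of the `N`-QP. -/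
noncomputable def cost {n m : ℕ} (A : Matrix (Fin n) (Fin n) ℝ) (B : Matrix (Fin n) (Fin m) ℝ)
    (P : Matrix (Fin n) (Fin n) ℝ) (Q : Matrix (Fin m) (Fin m) ℝ) (N : ℕ)
    (x : Fin n → ℝ) (u : ℕ → Fin m → ℝ) : ℝ :=
  (∑ τ ∈ Finset.range N, (qf P (traj A B x u τ) + qf Q (u τ))) + qf P (traj A B x u N)

/-- `V_N(x)`: the optimal value of the `N`-QP at `x`. -/
noncomputable def Vopt {n m : ℕ} (A : Matrix (Fin n) (Fin n) ℝ) (B : Matrix (Fin n) (Fin m) ℝ)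
    (P : Matrix (Fin n) (Fin n) ℝ) (Q : Matrix (Fin m) (Fin m) ℝ)
    (X0 : Set (Fin n → ℝ)) (U : Set (Fin m → ℝ)) (N : ℕ) (x : Fin n → ℝ) : ℝ :=
  sInf (cost A B P Q N x '' {u | Feasible A B X0 U N x u})

/-!
Every factor `1 - λ_min(P)/φ_{κ+1}` of `α` lies in `[0, χ]`, since
`λ_min(P) ≤ λ_max(P + KᵀQK) ≤ φ_{κ+1} ≤ φ_∞` (the first inequality by comparing traces).
Hence `α_M ≤ ψ χ^M`, and `α` is nonnegative and nonincreasing, so each of the at most `S + 1`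
factors `1 + α_ℓ` in `γ_{N,S}` has `ℓ ≥ N - S - 1` and is bounded by `1 + α_{N-S-1}`.
-/

section Eigenvalues

variable {k : ℕ} {R : Matrix (Fin k) (Fin k) ℝ}

lemma lamMin_le_eigenvalues (hR : R.IsHermitian) (i : Fin k) : lamMin R ≤ hR.eigenvalues i := by
  rw [lamMin, dif_pos hR]
  exact ciInf_le (Set.finite_range _).bddBelow i

lemma eigenvalues_le_lamMax (hR : R.IsHermitian) (i : Fin k) : hR.eigenvalues i ≤ lamMax R := by
  rw [lamMax, dif_pos hR]
  exact le_ciSup (Set.finite_range _).bddAbove i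

lemma card_mul_lamMin_le_trace (hR : R.IsHermitian) : (k : ℝ) * lamMin R ≤ R.trace := by
  simpa [hR.trace_eq_sum_eigenvalues] using
    card_nsmul_le_sum univ _ _ fun i _ ↦ lamMin_le_eigenvalues hR i

lemma trace_le_card_mul_lamMax (hR : R.IsHermitian) : R.trace ≤ (k : ℝ) * lamMax R := by
  simpa [hR.trace_eq_sum_eigenvalues] using
    sum_le_card_nsmul univ _ _ fun i _ ↦ eigenvalues_le_lamMax hR i

variable [Nonempty (Fin k)]

lemma Matrix.PosDef.lamMin_pos (hR : R.PosDef) : 0 < lamMin R := by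
  obtain ⟨i, hi⟩ := exists_eq_ciInf_of_finite (f := hR.isHermitian.eigenvalues)
  rw [lamMin, dif_pos hR.isHermitian, ← hi]
  exact hR.eigenvalues_pos i

lemma Matrix.PosSemidef.lamMax_nonneg (hR : R.PosSemidef) : 0 ≤ lamMax R :=
  (hR.eigenvalues_nonneg (Classical.arbitrary _)).trans (eigenvalues_le_lamMax hR.1 _)

lemma lamMin_le_lamMax (hR : R.IsHermitian) : lamMin R ≤ lamMax R :=
  (lamMin_le_eigenvalues hR (Classical.arbitrary _)).trans (eigenvalues_le_lamMax hR _)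

lemma lamMin_le_lamMax_add {A B : Matrix (Fin k) (Fin k) ℝ} (hA : A.IsHermitian)
    (hB : B.PosSemidef) : lamMin A ≤ lamMax (A + B) := by
  have hk : (0 : ℝ) < k := by exact_mod_cast Fin.pos_iff_nonempty.mpr ‹_›
  refine le_of_mul_le_mul_left ?_ hk
  calc (k : ℝ) * lamMin A ≤ A.trace := card_mul_lamMin_le_trace hA
    _ ≤ (A + B).trace := by rw [trace_add]; linarith [hB.trace_nonneg]
    _ ≤ k * lamMax (A + B) := trace_le_card_mul_lamMax (hA.add hB.1)

end Eigenvalues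

lemma one_le_one_sub_pow_div {x : ℝ} (hx0 : 0 ≤ x) (hx1 : x < 1) {j : ℕ} (hj : j ≠ 0) :
    1 ≤ (1 - x ^ j) / (1 - x) := by
  rw [le_div_iff₀ (sub_pos.2 hx1), one_mul]
  linarith [pow_le_of_le_one hx0 hx1.le hj]

lemma one_sub_pow_div_le {x : ℝ} (hx0 : 0 ≤ x) (hx1 : x < 1) (j : ℕ) :
    (1 - x ^ j) / (1 - x) ≤ 1 / (1 - x) :=
  div_le_div_of_nonneg_right (by linarith [pow_nonneg hx0 j]) (sub_pos.2 hx1).le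

section Phi

variable {n m : ℕ} {Qb Pb P : Matrix (Fin n) (Fin n) ℝ} {Q : Matrix (Fin m) (Fin m) ℝ}
  {K : Matrix (Fin m) (Fin n) ℝ}

lemma phiInf_eq :
    phiInf Qb Pb P Q K =
      lamMax Pb * lamMax (P + Kᵀ * Q * K) / lamMin Pb * (1 / (1 - lamParam Qb Pb)) := by
  rw [phiInf, div_mul_div_comm, mul_one]

lemma phi_le_phiInf (hPb : 0 < lamMin Pb) (hPb' : 0 ≤ lamMax Pb)
    (hc : 0 ≤ lamMax (P + Kᵀ * Q * K)) (hlam0 : 0 ≤ lamParam Qb Pb)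
    (hlam1 : lamParam Qb Pb < 1) (j : ℕ) : phi Qb Pb P Q K j ≤ phiInf Qb Pb P Q K := by
  rw [phi, phiInf_eq]
  exact mul_le_mul_of_nonneg_left (one_sub_pow_div_le hlam0 hlam1 _) (by positivity)

lemma lamMax_le_phi_succ (hPb : 0 < lamMin Pb) (hPb' : lamMin Pb ≤ lamMax Pb)
    (hc : 0 ≤ lamMax (P + Kᵀ * Q * K)) (hlam0 : 0 ≤ lamParam Qb Pb)
    (hlam1 : lamParam Qb Pb < 1) (j : ℕ) :
    lamMax (P + Kᵀ * Q * K) ≤ phi Qb Pb P Q K (j + 1) := by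
  have hratio : lamMax (P + Kᵀ * Q * K) ≤ lamMax Pb * lamMax (P + Kᵀ * Q * K) / lamMin Pb := by
    rw [le_div_iff₀ hPb, mul_comm]
    exact mul_le_mul_of_nonneg_right hPb' hc
  calc lamMax (P + Kᵀ * Q * K) ≤ lamMax Pb * lamMax (P + Kᵀ * Q * K) / lamMin Pb * 1 := by
        rwa [mul_one]
    _ ≤ phi Qb Pb P Q K (j + 1) := by
        rw [phi]
        gcongr
        · exact hc.trans hratio
        · exact one_le_one_sub_pow_div hlam0 hlam1 (by omega)

end Phi

lemma one_sub_lamMin_div_phi_succ_mem_Icc {n m : ℕ} [Nonempty (Fin n)]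
    {Qb Pb P : Matrix (Fin n) (Fin n) ℝ} {Q : Matrix (Fin m) (Fin m) ℝ}
    {K : Matrix (Fin m) (Fin n) ℝ} (hPb : Pb.PosDef) (hP : P.PosDef) (hQ : Q.PosSemidef)
    (hlam0 : 0 ≤ lamParam Qb Pb) (hlam1 : lamParam Qb Pb < 1) (j : ℕ) :
    1 - lamMin P / phi Qb Pb P Q K (j + 1) ∈ Set.Icc 0 (chiC Qb Pb P Q K) := by
  have hKQK : (Kᵀ * Q * K).PosSemidef := by simpa using hQ.conjTranspose_mul_mul_same K
  have hpc : lamMin P ≤ lamMax (P + Kᵀ * Q * K) := lamMin_le_lamMax_add hP.isHermitian hKQK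
  have hp := hP.lamMin_pos
  have hPb' := lamMin_le_lamMax hPb.isHermitian
  have hc := hp.le.trans hpc
  have hphi := lamMax_le_phi_succ hPb.lamMin_pos hPb' hc hlam0 hlam1 j
  refine ⟨?_, ?_⟩
  · rw [sub_nonneg, div_le_one (hp.trans_le (hpc.trans hphi))]
    exact hpc.trans hphi
  · rw [chiC, sub_le_sub_iff_left]
    exact div_le_div_of_nonneg_left hp.le (hp.trans_le (hpc.trans hphi))
      (phi_le_phiInf hPb.lamMin_pos (hPb.lamMin_pos.le.trans hPb') hc hlam0 hlam1 _)

lemma psiC_nonneg {n m : ℕ} [Nonempty (Fin n)] {P Abar : Matrix (Fin n) (Fin n) ℝ}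
    {Q : Matrix (Fin m) (Fin m) ℝ} {K : Matrix (Fin m) (Fin n) ℝ} (hP : P.PosDef)
    (hQ : Q.PosSemidef) : 0 ≤ psiC P Abar Q K := by
  have hKQK : (Kᵀ * Q * K).PosSemidef := by simpa using hQ.conjTranspose_mul_mul_same K
  have hAPA : (Abarᵀ * P * Abar).PosSemidef := by
    simpa using hP.posSemidef.conjTranspose_mul_mul_same Abar
  exact div_nonneg (hKQK.add hAPA).lamMax_nonneg hP.lamMin_pos.le

section Products

variable {ψ χ : ℝ} {f : ℕ → ℝ}

lemma mul_prod_range_le_mul_pow (hψ : 0 ≤ ψ) (hf : ∀ j, f j ∈ Set.Icc 0 χ) (M : ℕ) :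
    ψ * ∏ j ∈ range M, f j ≤ ψ * χ ^ M := by
  refine mul_le_mul_of_nonneg_left ?_ hψ
  simpa using prod_le_prod (fun j _ ↦ (hf j).1) (fun j _ ↦ (hf j).2) (s := range M)

lemma antitone_mul_prod_range (hψ : 0 ≤ ψ) (hf0 : ∀ j, 0 ≤ f j) (hf1 : ∀ j, f j ≤ 1) :
    Antitone fun M ↦ ψ * ∏ j ∈ range M, f j :=
  antitone_nat_of_succ_le fun M ↦ by
    rw [prod_range_succ, ← mul_assoc]
    exact mul_le_of_le_one_right (mul_nonneg hψ (prod_nonneg fun j _ ↦ hf0 j)) (hf1 M)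

end Products

lemma max_one_add_le_one_add_pow {α : ℕ → ℝ} (hα : Antitone α) (hα0 : ∀ M, 0 ≤ α M) (N S : ℕ) :
    max (1 + α (N - S - 1)) ((1 + α (N - 1)) * ∏ ℓ ∈ Ico (N - S) N, (1 + α ℓ))
      ≤ (1 + α (N - S - 1)) ^ (S + 2) := by
  have h1 : 1 ≤ 1 + α (N - S - 1) := le_add_of_nonneg_right (hα0 _)
  refine max_le (le_self_pow₀ h1 (by omega)) ?_
  calc (1 + α (N - 1)) * ∏ ℓ ∈ Ico (N - S) N, (1 + α ℓ)
      ≤ (1 + α (N - S - 1)) * ∏ ℓ ∈ Ico (N - S) N, (1 + α (N - S - 1)) := by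
        gcongr with ℓ hℓ
        · exact prod_nonneg fun ℓ _ ↦ by linarith [hα0 ℓ]
        · exact hα (by omega)
        · exact fun i _ ↦ by linarith [hα0 i]
        · exact hα (by have := (mem_Ico.mp hℓ).1; omega)
    _ = (1 + α (N - S - 1)) ^ (N - (N - S) + 1) := by rw [prod_const, Nat.card_Ico, pow_succ']
    _ ≤ (1 + α (N - S - 1)) ^ (S + 2) := pow_le_pow_right₀ h1 (by omega)

theorem stmt16_general {n m : ℕ} (hn : 0 < n)
    (Qb Pb P Abar : Matrix (Fin n) (Fin n) ℝ)
    (Q : Matrix (Fin m) (Fin m) ℝ) (K : Matrix (Fin m) (Fin n) ℝ)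
    (hPb : Pb.PosDef) (hP : P.PosDef) (hQ : Q.PosDef)
    (hlam0 : 0 < lamParam Qb Pb) (hlam1 : lamParam Qb Pb < 1)
    (hchi0 : 0 < chiC Qb Pb P Q K) (hchi1 : chiC Qb Pb P Q K < 1) :
    (∀ M : ℕ, alphaC Qb Pb P Abar Q K M ≤ psiC P Abar Q K * chiC Qb Pb P Q K ^ M) ∧
    ∀ S N : ℕ, 1 ≤ S → S + 1 ≤ N →
      gammaNS Qb Pb P Abar Q K N S
          ≤ chiC Qb Pb P Q K * (1 + alphaC Qb Pb P Abar Q K (N - S - 1)) ^ (S + 2) ∧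
        chiC Qb Pb P Q K * (1 + alphaC Qb Pb P Abar Q K (N - S - 1)) ^ (S + 2)
          ≤ chiC Qb Pb P Q K *
              (1 + psiC P Abar Q K * chiC Qb Pb P Q K ^ (N - S - 1)) ^ (S + 2) := by
  have : Nonempty (Fin n) := Fin.pos_iff_nonempty.mp hn
  have hf := one_sub_lamMin_div_phi_succ_mem_Icc (K := K) hPb hP hQ.posSemidef hlam0.le hlam1
  have hψ : 0 ≤ psiC P Abar Q K := psiC_nonneg hP hQ.posSemidef
  have hα_le : ∀ M, alphaC Qb Pb P Abar Q K M ≤ psiC P Abar Q K * chiC Qb Pb P Q K ^ M :=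
    mul_prod_range_le_mul_pow hψ hf
  have hα_nonneg : ∀ M, 0 ≤ alphaC Qb Pb P Abar Q K M :=
    fun M ↦ mul_nonneg hψ (prod_nonneg fun j _ ↦ (hf j).1)
  have hα_anti : Antitone (alphaC Qb Pb P Abar Q K) :=
    antitone_mul_prod_range hψ (fun j ↦ (hf j).1) (fun j ↦ (hf j).2.trans hchi1.le)
  refine ⟨hα_le, fun S N _ _ ↦ ⟨?_, ?_⟩⟩
  · exact mul_le_mul_of_nonneg_left (max_one_add_le_one_add_pow hα_anti hα_nonneg N S) hchi0.le
  · have := hα_nonneg (N - S - 1)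
    gcongr
    exact hα_le _

/-- Explicit bound on γ_{N,S}, inequality (12): with `λ ∈ (0,1)` and
`χ := 1 − λ_min(P)/φ_∞ ∈ (0,1)`, `ψ := λ_max(KᵀQK + ĀᵀPĀ)/λ_min(P)`, one has
`α_M ≤ ψ·χ^M` for every `M ≥ 0`, and for all `S ≥ 1`, `N ≥ S + 1`,
`γ_{N,S} ≤ χ·(1 + α_{N−S−1})^{S+2} ≤ χ·(1 + ψ·χ^{N−S−1})^{S+2}`. -/
theorem stmt16 {n m : ℕ} (hn : 0 < n)
    (Qb Pb P Abar : Matrix (Fin n) (Fin n) ℝ)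
    (Q : Matrix (Fin m) (Fin m) ℝ) (K : Matrix (Fin m) (Fin n) ℝ)
    (hQb : Qb.PosDef) (hPb : Pb.PosDef) (hP : P.PosDef) (hQ : Q.PosDef)
    (hlam0 : 0 < lamParam Qb Pb) (hlam1 : lamParam Qb Pb < 1)
    (hchi0 : 0 < chiC Qb Pb P Q K) (hchi1 : chiC Qb Pb P Q K < 1) :
    (∀ M : ℕ, alphaC Qb Pb P Abar Q K M ≤ psiC P Abar Q K * chiC Qb Pb P Q K ^ M) ∧
    ∀ S N : ℕ, 1 ≤ S → S + 1 ≤ N →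
      gammaNS Qb Pb P Abar Q K N S
          ≤ chiC Qb Pb P Q K * (1 + alphaC Qb Pb P Abar Q K (N - S - 1)) ^ (S + 2) ∧
        chiC Qb Pb P Q K * (1 + alphaC Qb Pb P Abar Q K (N - S - 1)) ^ (S + 2)
          ≤ chiC Qb Pb P Q K *
              (1 + psiC P Abar Q K * chiC Qb Pb P Q K ^ (N - S - 1)) ^ (S + 2) :=
  stmt16_general hn Qb Pb P Abar Q K hPb hP hQ hlam0 hlam1 hchi0 hchi1
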